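/- Let p = 2 and let C ⊆ F_{2^m}^N be an additive code with Construction A lattice Λ(C) ⊆ R^{Nm} (scaling 1/√2) and symmetric unimodular integer Gram matrix g with entries w_{i,t,j,s}. Then Λ(C) is even with respect to b(λ,λ') = λ g λ'^T if and only if for every codeword c ∈ C, Σ_{i,t,j,s} ι(c_{i,t}) ι(c_{j,s}) w_{i,t,j,s} ∈ 4Z. -/

import Mathlib

/-!
A lattice vector is `λ = (r(c) + 2l)/√2` with `l` integral, so `b(λ, λ) = Q(r(c) + 2l)/2` where
`Q(v) = vᵀ g v`. Evenness thus means `4 ∣ Q(r(c) + 2l)` for all `l`, and for symmetric `g` the cross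
terms of `Q(r + 2l) = Q(r) + 4 rᵀ g l + 4 Q(l)` are divisible by 4, so only `l = 0` matters.
-/

open scoped BigOperators

noncomputable section

/-- Construction A lattice of an additive code over `F_{2^m}`: expand codeword coordinates
in the basis `e`, lift the `F_2`-coefficients to integers, and scale by `1/√2`. -/
def latticeF (m N : ℕ)
    (e : Module.Basis (Fin m) (ZMod 2) (GaloisField 2 m))
    (C : Set (Fin N → GaloisField 2 m)) : Set (Fin N × Fin m → ℝ) :=
  { lam | ∃ c ∈ C, ∃ l : Fin N × Fin m → ℤ, ∀ x : Fin N × Fin m,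
      lam x = (((e.repr (c x.1) x.2).val : ℝ) + 2 * l x) / Real.sqrt 2 }

/-- Bilinear form on `ℝ^{Nm}` given by an integer Gram matrix `g`. -/
def bForm {N m : ℕ} (g : Matrix (Fin N × Fin m) (Fin N × Fin m) ℤ)
    (lam lam' : Fin N × Fin m → ℝ) : ℝ :=
  ∑ x, ∑ y, lam x * (g x y : ℝ) * lam' y

/-- `r(c)` in the notation of Construction A. -/
def liftCoeffs {m N : ℕ} (e : Module.Basis (Fin m) (ZMod 2) (GaloisField 2 m))
    (c : Fin N → GaloisField 2 m) (x : Fin N × Fin m) : ℤ :=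
  ((e.repr (c x.1) x.2).val : ℤ)

theorem mem_latticeF_iff {m N : ℕ} {e : Module.Basis (Fin m) (ZMod 2) (GaloisField 2 m)}
    {C : Set (Fin N → GaloisField 2 m)} {lam : Fin N × Fin m → ℝ} :
    lam ∈ latticeF m N e C ↔ ∃ c ∈ C, ∃ l : Fin N × Fin m → ℤ,
      lam = fun x => ((liftCoeffs e c x + 2 * l x : ℤ) : ℝ) / Real.sqrt 2 := by
  simp only [latticeF, Set.mem_ofPred_eq, funext_iff, liftCoeffs]
  push_cast
  rfl

theorem bForm_div_sqrt_two {N m : ℕ} (g : Matrix (Fin N × Fin m) (Fin N × Fin m) ℤ)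
    (v w : Fin N × Fin m → ℤ) :
    bForm g (fun x => (v x : ℝ) / Real.sqrt 2) (fun y => (w y : ℝ) / Real.sqrt 2) =
      ((∑ x, ∑ y, v x * w y * g x y : ℤ) : ℝ) / 2 := by
  have hterm : ∀ a b c : ℝ, a / Real.sqrt 2 * c * (b / Real.sqrt 2) = a * b * c / 2 := by
    intro a b c
    field_simp
    rw [Real.sq_sqrt zero_le_two]
    ring
  simp only [bForm, hterm]
  push_cast
  simp only [Finset.sum_div]

theorem exists_div_two_eq_two_mul_iff (n : ℤ) :
    (∃ z : ℤ, (n : ℝ) / 2 = 2 * z) ↔ (4 : ℤ) ∣ n := by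
  constructor
  · rintro ⟨z, hz⟩
    exact ⟨z, by exact_mod_cast (by linarith : (n : ℝ) = 4 * z)⟩
  · rintro ⟨k, rfl⟩
    exact ⟨k, by push_cast; ring⟩

theorem Matrix.IsSymm.sum_sum_add_two_mul_modEq_four {ι : Type*} [Fintype ι]
    {g : Matrix ι ι ℤ} (hg : g.IsSymm) (r l : ι → ℤ) :
    ∑ x, ∑ y, (r x + 2 * l x) * (r y + 2 * l y) * g x y ≡ ∑ x, ∑ y, r x * r y * g x y [ZMOD 4] := by
  have hcross : ∑ x, ∑ y, l x * r y * g x y = ∑ x, ∑ y, r x * l y * g x y := by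
    rw [Finset.sum_comm]
    simp only [hg.apply, mul_comm (l _) (r _)]
  have hexpand : ∑ x, ∑ y, (r x + 2 * l x) * (r y + 2 * l y) * g x y =
      ∑ x, ∑ y, r x * r y * g x y +
        4 * (∑ x, ∑ y, r x * l y * g x y + ∑ x, ∑ y, l x * l y * g x y) := by
    have hterm (x y : ι) : (r x + 2 * l x) * (r y + 2 * l y) * g x y = r x * r y * g x y +
        2 * (l x * r y * g x y) + 2 * (r x * l y * g x y) + 4 * (l x * l y * g x y) := by
      ring
    simp only [hterm, Finset.sum_add_distrib, ← Finset.mul_sum, hcross]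
    ring
  rw [hexpand]
  exact Int.add_mul_emod_self_left _ _ _

theorem latticeF_even_iff_p_two_general (m N : ℕ)
    (e : Module.Basis (Fin m) (ZMod 2) (GaloisField 2 m))
    (C : AddSubgroup (Fin N → GaloisField 2 m))
    (g : Matrix (Fin N × Fin m) (Fin N × Fin m) ℤ)
    (hg_symm : g.IsSymm) :
    (∀ lam ∈ latticeF m N e (C : Set _), ∃ z : ℤ, bForm g lam lam = 2 * z) ↔
      (∀ c ∈ C, (4 : ℤ) ∣
        ∑ x : Fin N × Fin m, ∑ y : Fin N × Fin m,
          ((e.repr (c x.1) x.2).val : ℤ) * ((e.repr (c y.1) y.2).val : ℤ) * g x y) := by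
  have heven_iff (v : Fin N × Fin m → ℤ) :
      (∃ z : ℤ, bForm g (fun x => (v x : ℝ) / Real.sqrt 2) (fun x => (v x : ℝ) / Real.sqrt 2) =
        2 * z) ↔ (4 : ℤ) ∣ ∑ x, ∑ y, v x * v y * g x y := by
    rw [bForm_div_sqrt_two, exists_div_two_eq_two_mul_iff]
  constructor
  · intro h c hc
    exact (heven_iff (liftCoeffs e c)).1 (h _ (mem_latticeF_iff.2 ⟨c, hc, 0, by simp⟩))
  · intro h lam hlam
    obtain ⟨c, hc, l, rfl⟩ := mem_latticeF_iff.1 hlam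
    rw [heven_iff, (hg_symm.sum_sum_add_two_mul_modEq_four _ l).dvd_iff]
    exact h c hc

theorem latticeF_even_iff_p_two (m N : ℕ)
    (e : Module.Basis (Fin m) (ZMod 2) (GaloisField 2 m))
    (C : AddSubgroup (Fin N → GaloisField 2 m))
    (g : Matrix (Fin N × Fin m) (Fin N × Fin m) ℤ)
    (hg_symm : g.IsSymm) (hg_uni : IsUnit g.det) :
    (∀ lam ∈ latticeF m N e (C : Set _), ∃ z : ℤ, bForm g lam lam = 2 * z) ↔
      (∀ c ∈ C, (4 : ℤ) ∣
        ∑ x : Fin N × Fin m, ∑ y : Fin N × Fin m,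
          ((e.repr (c x.1) x.2).val : ℤ) * ((e.repr (c y.1) y.2).val : ℤ) * g x y) :=
  latticeF_even_iff_p_two_general m N e C g hg_symm

end
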